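/- Let a, b, c > 0 and let Λ = {(m₁, m₂, m₃, a(n₁ + n₂), b(n₂ − n₁), c n₃) : m₁, m₂, m₃, n₁, n₂, n₃ ∈ ℤ} ⊂ ℝ³ × ℝ³. If either (a > 1/2 and b > 1/2) or c > 1, then the Gabor system (g₃, Λ) is incomplete in L²(ℝ³): there exists a nonzero F ∈ L²(ℝ³) with ⟨F, π(λ)g₃⟩ = 0 for all λ ∈ Λ. -/

import Mathlib

open MeasureTheory Complex

noncomputable section

/-- Euclidean dot product on `ι → ℝ`. -/
def dotR {ι : Type*} [Fintype ι] (x y : ι → ℝ) : ℝ := ∑ i, x i * y i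

/-- Time-frequency shift `π(x,ω) g (t) = e^{2πi⟨ω,t⟩} g(t-x)`. -/
def tfShift {ι : Type*} [Fintype ι] (x ω : ι → ℝ) (g : (ι → ℝ) → ℂ) : (ι → ℝ) → ℂ :=
  fun t => Complex.exp (2 * Real.pi * Complex.I * (dotR ω t : ℝ)) * g (t - x)

/-- The Gabor coefficient `⟨f, π(x,ω) g⟩` in `L²`; equivalently the
short-time Fourier transform `V_g f (x, ω)`. -/
def gaborCoef {ι : Type*} [Fintype ι] (f g : (ι → ℝ) → ℂ) (x ω : ι → ℝ) : ℂ :=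
  ∫ t : ι → ℝ, f t * (starRingEnd ℂ) (tfShift x ω g t)

/-- `(g, Λ)` satisfies the frame inequalities for `L²(ℝ^ι)` with bounds `A`, `B`. -/
def IsGaborFrameWith {ι : Type*} [Fintype ι] (g : (ι → ℝ) → ℂ)
    (Λ : Set ((ι → ℝ) × (ι → ℝ))) (A B : ℝ) : Prop :=
  ∀ f : (ι → ℝ) → ℂ, MemLp f 2 volume →
    A * (∫ t, ‖f t‖ ^ 2) ≤
        (∑' lam : Λ, ‖gaborCoef f g (lam : ((ι → ℝ) × (ι → ℝ))).1 (lam : ((ι → ℝ) × (ι → ℝ))).2‖ ^ 2) ∧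
    (∑' lam : Λ, ‖gaborCoef f g (lam : ((ι → ℝ) × (ι → ℝ))).1 (lam : ((ι → ℝ) × (ι → ℝ))).2‖ ^ 2) ≤
        B * (∫ t, ‖f t‖ ^ 2)

/-- `(g, Λ)` is a frame for `L²(ℝ^ι)`. -/
def GaborFrame {ι : Type*} [Fintype ι] (g : (ι → ℝ) → ℂ)
    (Λ : Set ((ι → ℝ) × (ι → ℝ))) : Prop :=
  ∃ A B : ℝ, 0 < A ∧ 0 < B ∧ IsGaborFrameWith g Λ A B

/-- `(g, Λ)` is complete in `L²(ℝ^ι)`. -/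
def GaborComplete {ι : Type*} [Fintype ι] (g : (ι → ℝ) → ℂ)
    (Λ : Set ((ι → ℝ) × (ι → ℝ))) : Prop :=
  ∀ f : (ι → ℝ) → ℂ, MemLp f 2 volume →
    (∀ lam ∈ Λ, gaborCoef f g lam.1 lam.2 = 0) → f =ᵐ[volume] 0

/-- The normalized Gaussian `g_d(t) = 2^{d/4} e^{-π ‖t‖²}` in dimension `d = card ι`. -/
def gaussian (ι : Type*) [Fintype ι] : (ι → ℝ) → ℂ :=
  fun t => (((2 : ℝ) ^ ((Fintype.card ι : ℝ) / 4) * Real.exp (-(Real.pi * dotR t t)) : ℝ) : ℂ)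

/-! The lattice splits by the parity of `n₁ + n₂`: for odd `n₁ + n₂` the first frequency lies in
`a + 2aℤ`, for even `n₁ + n₂` the second one lies in `2bℤ`; the third frequency always lies in
`cℤ`. A tensor product of one-dimensional functions is therefore a witness as soon as, for each
`β > 1`, some nonzero `F ∈ L²(ℝ)` is orthogonal to every `M_{βn} T_m g₁` with `m, n ∈ ℤ`.

Take `F(t) = d_{⌊βt⌋} e^{πt²}` with `d_j = (-1)^j e^{-π j(j-1)/β}`, which is in `L²` because
`β > 1`. Against `M_{βn} T_m g₁` the integrand is `d_{⌊βt⌋} e^{αt}` up to a constant, where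
`e^{αt}` takes the real values `e^{2πmj/β}` on the grid `ℤ/β`. Integrating over the intervals
`[j/β, (j+1)/β)` turns the integral into `∫₀^{1/β} e^{αt} dt · ∑ⱼ d_j e^{2πmj/β}`, and this sum
vanishes: its terms `(-1)^j e^{-π j(j-2m-1)/β}` change sign under `j ↦ 2m+1-j`. -/

open Real ComplexConjugate

def tfShift₁ (x ω : ℝ) (g : ℝ → ℂ) : ℝ → ℂ :=
  fun s => cexp (2 * π * I * ((ω * s : ℝ) : ℂ)) * g (s - x)

def gaborCoef₁ (f g : ℝ → ℂ) (x ω : ℝ) : ℂ := ∫ s, f s * conj (tfShift₁ x ω g s)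

def gaussian₁ : ℝ → ℂ := fun s => ((2 ^ (1 / 4 : ℝ) * rexp (-(π * s ^ 2)) : ℝ) : ℂ)

lemma norm_tfShift₁ (x ω : ℝ) (g : ℝ → ℂ) (s : ℝ) : ‖tfShift₁ x ω g s‖ = ‖g (s - x)‖ := by
  rw [tfShift₁, norm_mul, Complex.norm_exp]
  simp

lemma MeasureTheory.MemLp.tfShift₁ {p : ENNReal} {g : ℝ → ℂ} (hg : MemLp g p) (x ω : ℝ) :
    MemLp (tfShift₁ x ω g) p := by
  have hshift : MemLp (fun s => g (s - x)) p :=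
    hg.comp_measurePreserving (measurePreserving_sub_right volume x)
  refine hshift.of_le ?_ (ae_of_all _ fun s => (norm_tfShift₁ x ω g s).le)
  exact (Continuous.aestronglyMeasurable (by fun_prop)).mul hshift.1

lemma tfShift₁_ne_zero {g : ℝ → ℂ} (hg : ∀ s, g s ≠ 0) (x ω s : ℝ) : tfShift₁ x ω g s ≠ 0 :=
  mul_ne_zero (Complex.exp_ne_zero _) (hg _)

lemma gaborCoef₁_tfShift₁_zero (θ : ℝ) (f g : ℝ → ℂ) (x ω : ℝ) :
    gaborCoef₁ (tfShift₁ 0 θ f) g x ω = gaborCoef₁ f g x (ω - θ) := by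
  refine integral_congr_ae (ae_of_all _ fun s => ?_)
  have hphase : cexp (2 * π * I * ((θ * s : ℝ) : ℂ)) * conj (cexp (2 * π * I * ((ω * s : ℝ) : ℂ)))
      = conj (cexp (2 * π * I * (((ω - θ) * s : ℝ) : ℂ))) := by
    simp only [← Complex.exp_conj, ← Complex.exp_add, map_mul, Complex.conj_ofReal,
      Complex.conj_I, map_ofNat]
    congr 1
    push_cast
    ring
  simp only [tfShift₁, map_mul, sub_zero]
  linear_combination f s * conj (g (s - x)) * hphase

lemma memLp_two_exp_neg_mul_sq {c : ℝ} (hc : 0 < c) :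
    MemLp (fun t : ℝ => rexp (-(c * t ^ 2))) 2 := by
  refine (memLp_two_iff_integrable_sq_norm (by fun_prop)).2 ?_
  refine (integrable_exp_neg_mul_sq (by positivity : 0 < 2 * c)).congr (ae_of_all _ fun t => ?_)
  simp only [Real.norm_eq_abs, Real.abs_exp, sq (rexp _), ← Real.exp_add]
  ring_nf

lemma memLp_gaussian₁ : MemLp gaussian₁ 2 :=
  ((memLp_two_exp_neg_mul_sq pi_pos).const_mul _).ofReal

lemma gaussian₁_ne_zero (s : ℝ) : gaussian₁ s ≠ 0 :=
  Complex.ofReal_ne_zero.2 (by positivity)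

section PureTensor

variable {ι : Type*} [Fintype ι]

def pureTensor (f : ι → ℝ → ℂ) : (ι → ℝ) → ℂ := fun t => ∏ i, f i (t i)

lemma tfShift_pureTensor (f : ι → ℝ → ℂ) (x ω t : ι → ℝ) :
    tfShift x ω (pureTensor f) t = ∏ i, tfShift₁ (x i) (ω i) (f i) (t i) := by
  simp only [tfShift, tfShift₁, pureTensor, dotR]
  rw [Finset.prod_mul_distrib, ← Complex.exp_sum]
  push_cast
  rw [Finset.mul_sum]
  rfl

lemma gaborCoef_pureTensor (f g : ι → ℝ → ℂ) (x ω : ι → ℝ) :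
    gaborCoef (pureTensor f) (pureTensor g) x ω = ∏ i, gaborCoef₁ (f i) (g i) (x i) (ω i) := by
  simp_rw [gaborCoef, tfShift_pureTensor, map_prod, pureTensor, ← Finset.prod_mul_distrib]
  exact integral_fintype_prod_volume_eq_prod
    (fun i s => f i s * conj (tfShift₁ (x i) (ω i) (g i) s))

lemma gaussian_eq_pureTensor : gaussian ι = pureTensor fun _ => gaussian₁ := by
  ext t
  simp only [gaussian, gaussian₁, pureTensor, dotR]
  rw [← Complex.ofReal_prod, Finset.prod_mul_distrib, Finset.prod_const, ← Real.exp_sum,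
    Finset.card_univ, ← Real.rpow_natCast, ← Real.rpow_mul zero_le_two, Finset.sum_neg_distrib,
    Finset.mul_sum]
  simp only [sq]
  ring_nf

lemma memLp_pureTensor {f : ι → ℝ → ℂ} (hf : ∀ i, MemLp (f i) 2) : MemLp (pureTensor f) 2 := by
  have hmeas : AEStronglyMeasurable (pureTensor f) :=
    Finset.aestronglyMeasurable_fun_prod _ fun i _ =>
      (hf i).1.comp_quasiMeasurePreserving (Measure.quasiMeasurePreserving_eval _ i)
  rw [memLp_two_iff_integrable_sq_norm hmeas]
  simp_rw [pureTensor, norm_prod, ← Finset.prod_pow]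
  exact Integrable.fintype_prod fun i => (memLp_two_iff_integrable_sq_norm (hf i).1).1 (hf i)

lemma pureTensor_not_ae_eq_zero {f : ι → ℝ → ℂ} (hf : ∀ i s, f i s ≠ 0) :
    ¬ pureTensor f =ᵐ[volume] 0 := fun h =>
  let ⟨t, ht⟩ := h.exists
  Finset.prod_ne_zero_iff.2 (fun i _ => hf i (t i)) ht

lemma exists_memLp_gaborCoef_gaussian_eq_zero {f : ι → ℝ → ℂ}
    (hf : ∀ i, MemLp (f i) 2) (hne : ∀ i s, f i s ≠ 0) {Λ : Set ((ι → ℝ) × (ι → ℝ))}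
    (hΛ : ∀ lam ∈ Λ, ∃ i, gaborCoef₁ (f i) gaussian₁ (lam.1 i) (lam.2 i) = 0) :
    ∃ F : (ι → ℝ) → ℂ, MemLp F 2 volume ∧ ¬ (F =ᵐ[volume] 0) ∧
      ∀ lam ∈ Λ, gaborCoef F (gaussian ι) lam.1 lam.2 = 0 := by
  refine ⟨pureTensor f, memLp_pureTensor hf, pureTensor_not_ae_eq_zero hne, fun lam hlam => ?_⟩
  obtain ⟨i, hi⟩ := hΛ lam hlam
  rw [gaussian_eq_pureTensor, gaborCoef_pureTensor]
  exact Finset.prod_eq_zero (Finset.mem_univ i) hi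

end PureTensor

lemma tsum_eq_zero_of_apply_sub_eq_neg (k : ℤ) {f : ℤ → ℝ} (hf : ∀ j, f (k - j) = -f j) :
    ∑' j, f j = 0 := by
  have h : ∑' j, f j = -∑' j, f j :=
    calc ∑' j, f j = ∑' j, f (k - j) := ((Equiv.subLeft k).tsum_eq f).symm
      _ = -∑' j, f j := by simp only [hf, tsum_neg]
  linarith

lemma integral_floor_mul_cexp {β : ℝ} (hβ : 0 < β) (c : ℤ → ℂ) (α : ℂ)
    (hint : Integrable fun s : ℝ => c ⌊β * s⌋ * cexp (α * s)) :
    ∫ s : ℝ, c ⌊β * s⌋ * cexp (α * s) =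
      β⁻¹ * ((∫ x in (0 : ℝ)..1, cexp (α / β * x)) * ∑' j : ℤ, c j * cexp (α / β * j)) := by
  set k : ℝ → ℂ := fun u => c ⌊u⌋ * cexp (α / β * u) with hk
  have hrescale : (fun s : ℝ => c ⌊β * s⌋ * cexp (α * s)) = fun s => k (β * s) := by
    have : (β : ℂ) ≠ 0 := Complex.ofReal_ne_zero.2 hβ.ne'
    ext s
    simp only [hk]
    push_cast
    field_simp
  have hpiece : ∀ j : ℤ, ∫ x in (0 : ℝ)..1, k (x + j) =
      c j * cexp (α / β * j) * ∫ x in (0 : ℝ)..1, cexp (α / β * x) := by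
    intro j
    simp only [intervalIntegral.integral_of_le zero_le_one, integral_Ioc_eq_integral_Ioo,
      ← integral_const_mul]
    refine setIntegral_congr_fun measurableSet_Ioo fun x hx => ?_
    have hfloor : ⌊x + j⌋ = j := by
      rw [Int.floor_eq_iff]
      constructor <;> linarith [hx.1, hx.2]
    simp only [hk, hfloor]
    push_cast
    rw [mul_add, Complex.exp_add]
    ring
  have hkint : Integrable k := (integrable_comp_mul_left_iff k hβ.ne').1 (hrescale ▸ hint)
  rw [hrescale, Measure.integral_comp_mul_left, abs_of_pos (inv_pos.2 hβ),
    ← hkint.hasSum_intervalIntegral_comp_add_int.tsum_eq]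
  simp only [hpiece, tsum_mul_right, Complex.real_smul, Complex.ofReal_inv]
  ring

def thetaCoeff (β : ℝ) (j : ℤ) : ℝ := (-1) ^ j * rexp (-(π / β) * (j * (j - 1)))

def thetaStep (β : ℝ) : ℝ → ℂ := fun t => ((thetaCoeff β ⌊β * t⌋ * rexp (π * t ^ 2) : ℝ) : ℂ)

lemma tsum_thetaCoeff_mul_exp (β : ℝ) (m : ℤ) :
    ∑' j : ℤ, thetaCoeff β j * rexp (2 * π * m / β * j) = 0 := by
  refine tsum_eq_zero_of_apply_sub_eq_neg (2 * m + 1) fun j => ?_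
  have hsign : (-1 : ℝ) ^ (2 * m + 1 - j) = -(-1) ^ j := by
    rcases Int.even_or_odd j with h | h
    · obtain ⟨r, hr⟩ := h
      rw [Even.neg_one_zpow ⟨r, hr⟩, Odd.neg_one_zpow ⟨m - r, by omega⟩]
    · obtain ⟨r, hr⟩ := h
      rw [Odd.neg_one_zpow ⟨r, hr⟩, Even.neg_one_zpow ⟨m - r, by omega⟩, neg_neg]
  simp only [thetaCoeff, hsign, mul_assoc, ← Real.exp_add]
  rw [neg_mul]
  congr 3
  push_cast
  ring

lemma sq_sub_three_mul_abs_le_floor_mul_floor_sub_one (u : ℝ) :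
    u ^ 2 - 3 * |u| ≤ ⌊u⌋ * (⌊u⌋ - 1) := by
  have h1 := Int.floor_le u
  have h2 := Int.lt_floor_add_one u
  nlinarith [le_abs_self u, neg_abs_le u, abs_nonneg u]

lemma norm_thetaStep_le {β : ℝ} (hβ : 1 < β) (t : ℝ) :
    ‖thetaStep β t‖ ≤ rexp (9 * π / (2 * (β - 1))) * rexp (-(π * (β - 1) / 2 * t ^ 2)) := by
  have hfloor := sq_sub_three_mul_abs_le_floor_mul_floor_sub_one (β * t)
  have hβ0 : 0 < β := by linarith
  have hβ1 : 0 < β - 1 := by linarith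
  rw [thetaStep, Complex.norm_real, Real.norm_eq_abs, thetaCoeff, abs_mul, abs_mul,
    abs_neg_one_zpow, Real.abs_exp, Real.abs_exp, one_mul, ← Real.exp_add, ← Real.exp_add]
  refine Real.exp_le_exp.2 ?_
  have hquad : π / β * ((β * t) ^ 2 - 3 * |β * t|) ≤ π / β * (⌊β * t⌋ * (⌊β * t⌋ - 1)) :=
    mul_le_mul_of_nonneg_left hfloor (by positivity)
  have hscale : π / β * ((β * t) ^ 2 - 3 * |β * t|) = π * β * t ^ 2 - 3 * π * |t| := by
    rw [abs_mul, abs_of_pos hβ0]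
    field_simp
  have hamgm : 3 * π * |t| ≤ π * (β - 1) / 2 * t ^ 2 + 9 * π / (2 * (β - 1)) := by
    have : 0 ≤ π / (2 * (β - 1)) * ((β - 1) * |t| - 3) ^ 2 := by positivity
    have ht : |t| ^ 2 = t ^ 2 := sq_abs t
    field_simp at this ⊢
    nlinarith [this, ht]
  nlinarith [hquad, hscale, hamgm]

lemma measurable_thetaStep (β : ℝ) : Measurable (thetaStep β) := by
  have hcoeff : Measurable fun t : ℝ => thetaCoeff β ⌊β * t⌋ :=
    (measurable_from_top (f := thetaCoeff β)).comp
      (Int.measurable_floor.comp (measurable_const_mul β))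
  unfold thetaStep
  fun_prop

lemma memLp_thetaStep {β : ℝ} (hβ : 1 < β) : MemLp (thetaStep β) 2 := by
  have hc : 0 < π * (β - 1) / 2 := by nlinarith [pi_pos]
  refine (memLp_two_exp_neg_mul_sq hc).of_le_mul (c := rexp (9 * π / (2 * (β - 1))))
    (measurable_thetaStep β).aestronglyMeasurable (ae_of_all _ fun t => ?_)
  rw [Real.norm_eq_abs, Real.abs_exp]
  exact norm_thetaStep_le hβ t

lemma thetaStep_ne_zero (β t : ℝ) : thetaStep β t ≠ 0 :=
  Complex.ofReal_ne_zero.2 <| mul_ne_zero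
    (mul_ne_zero (zpow_ne_zero _ (by norm_num)) (Real.exp_ne_zero _)) (Real.exp_ne_zero _)

lemma thetaStep_mul_conj_tfShift₁ (β : ℝ) (m n : ℤ) (s : ℝ) :
    thetaStep β s * conj (tfShift₁ m (β * n) gaussian₁ s) =
      ((2 ^ (1 / 4 : ℝ) * rexp (-(π * m ^ 2)) * thetaCoeff β ⌊β * s⌋ : ℝ) : ℂ) *
        cexp ((2 * π * m - 2 * π * β * n * I) * s) := by
  have hexp : cexp (π * ((s ^ 2 : ℝ) : ℂ)) * cexp (2 * π * -I * (β * ((n : ℝ) : ℂ) * s)) *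
      cexp ((-(π * (s - m) ^ 2) : ℝ) : ℂ) =
      cexp ((-(π * m ^ 2) : ℝ) : ℂ) * cexp ((2 * π * m - 2 * π * β * n * I) * s) := by
    simp only [← Complex.exp_add]
    congr 1
    push_cast
    ring
  simp only [thetaStep, tfShift₁, gaussian₁, map_mul, ← Complex.exp_conj, Complex.conj_ofReal,
    Complex.conj_I, map_ofNat, Complex.ofReal_mul, Complex.ofReal_exp]
  linear_combination ((thetaCoeff β ⌊β * s⌋ : ℂ) * ((2 ^ (1 / 4 : ℝ) : ℝ) : ℂ)) * hexp

lemma gaborCoef₁_thetaStep_gaussian₁_eq_zero {β : ℝ} (hβ : 1 < β) (m n : ℤ) :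
    gaborCoef₁ (thetaStep β) gaussian₁ m (β * n) = 0 := by
  have hβ0 : 0 < β := by linarith
  have hint : Integrable fun s => thetaStep β s * conj (tfShift₁ m (β * n) gaussian₁ s) :=
    (memLp_thetaStep hβ).integrable_mul ((memLp_gaussian₁.tfShift₁ m (β * n)).star)
  set K : ℝ := 2 ^ (1 / 4 : ℝ) * rexp (-(π * m ^ 2))
  set α : ℂ := 2 * π * m - 2 * π * β * n * I
  have hpt := funext (thetaStep_mul_conj_tfShift₁ β m n)
  have hperiod : ∀ j : ℤ, cexp (α / β * j) = rexp (2 * π * m / β * j) := by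
    intro j
    have : α / β * j = ((2 * π * m / β * j : ℝ) : ℂ) + ((-(n * j) : ℤ) : ℂ) * (2 * π * I) := by
      have : (β : ℂ) ≠ 0 := Complex.ofReal_ne_zero.2 hβ0.ne'
      push_cast
      field_simp
      ring
    rw [this, Complex.exp_add, Complex.exp_int_mul_two_pi_mul_I, mul_one, Complex.ofReal_exp]
  have hsum : ∑' j : ℤ, ((K * thetaCoeff β j : ℝ) : ℂ) * cexp (α / β * j) = 0 := by
    simp_rw [hperiod, ← Complex.ofReal_mul]
    rw [← Complex.ofReal_tsum]
    simp_rw [mul_assoc K, tsum_mul_left, tsum_thetaCoeff_mul_exp, mul_zero, Complex.ofReal_zero]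
  rw [hpt] at hint
  rw [gaborCoef₁, hpt]
  refine (integral_floor_mul_cexp hβ0 (fun j => ((K * thetaCoeff β j : ℝ) : ℂ)) α hint).trans ?_
  rw [hsum, mul_zero, mul_zero]

theorem gaussian_incomplete_dim3_general (a b c : ℝ)
    (hcond : (1 / 2 < a ∧ 1 / 2 < b) ∨ 1 < c) :
    ∃ F : (Fin 3 → ℝ) → ℂ, MemLp F 2 volume ∧ ¬ (F =ᵐ[volume] 0) ∧
      ∀ lam ∈ {p : (Fin 3 → ℝ) × (Fin 3 → ℝ) | ∃ m₁ m₂ m₃ n₁ n₂ n₃ : ℤ,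
          p = (![(m₁ : ℝ), (m₂ : ℝ), (m₃ : ℝ)],
               ![a * ((n₁ : ℝ) + (n₂ : ℝ)), b * ((n₂ : ℝ) - (n₁ : ℝ)), c * (n₃ : ℝ)])},
        gaborCoef F (gaussian (Fin 3)) lam.1 lam.2 = 0 := by
  rcases hcond with ⟨ha, hb⟩ | hc
  · refine exists_memLp_gaborCoef_gaussian_eq_zero
      (f := ![tfShift₁ 0 a (thetaStep (2 * a)), thetaStep (2 * b), gaussian₁]) ?_ ?_ ?_
    · simp [Fin.forall_fin_succ, (memLp_thetaStep (by linarith : 1 < 2 * a)).tfShift₁,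
        memLp_thetaStep (by linarith : 1 < 2 * b), memLp_gaussian₁]
    · simp [Fin.forall_fin_succ, tfShift₁_ne_zero (thetaStep_ne_zero _), thetaStep_ne_zero,
        gaussian₁_ne_zero]
    rintro _ ⟨m₁, m₂, m₃, n₁, n₂, n₃, rfl⟩
    rcases Int.even_or_odd (n₁ + n₂) with ⟨k, hk⟩ | ⟨k, hk⟩
    · have hω : b * ((n₂ : ℝ) - n₁) = 2 * b * ((k - n₁ : ℤ) : ℝ) := by
        push_cast
        linear_combination b * (by exact_mod_cast hk : (n₁ : ℝ) + n₂ = k + k)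
      refine ⟨1, ?_⟩
      simp only [Matrix.cons_val_one, Matrix.cons_val_zero, hω]
      exact gaborCoef₁_thetaStep_gaussian₁_eq_zero (by linarith) _ _
    · have hω : a * ((n₁ : ℝ) + n₂) - a = 2 * a * (k : ℝ) := by
        linear_combination a * (by exact_mod_cast hk : (n₁ : ℝ) + n₂ = 2 * k + 1)
      refine ⟨0, ?_⟩
      simp only [Matrix.cons_val_zero, gaborCoef₁_tfShift₁_zero, hω]
      exact gaborCoef₁_thetaStep_gaussian₁_eq_zero (by linarith) _ _
  · refine exists_memLp_gaborCoef_gaussian_eq_zero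
      (f := ![gaussian₁, gaussian₁, thetaStep c]) ?_ ?_ ?_
    · simp [Fin.forall_fin_succ, memLp_thetaStep hc, memLp_gaussian₁]
    · simp [Fin.forall_fin_succ, thetaStep_ne_zero, gaussian₁_ne_zero]
    rintro _ ⟨m₁, m₂, m₃, n₁, n₂, n₃, rfl⟩
    exact ⟨2, gaborCoef₁_thetaStep_gaussian₁_eq_zero hc _ _⟩

/-- if `a > 1/2 ∧ b > 1/2`, or `c > 1`, the 3-dimensional Gaussian
Gabor system over the indicated lattice is incomplete in `L²(ℝ³)`. -/
theorem gaussian_incomplete_dim3 (a b c : ℝ)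
    (ha : 0 < a) (hb : 0 < b) (hc : 0 < c)
    (hcond : (1 / 2 < a ∧ 1 / 2 < b) ∨ 1 < c) :
    ∃ F : (Fin 3 → ℝ) → ℂ, MemLp F 2 volume ∧ ¬ (F =ᵐ[volume] 0) ∧
      ∀ lam ∈ {p : (Fin 3 → ℝ) × (Fin 3 → ℝ) | ∃ m₁ m₂ m₃ n₁ n₂ n₃ : ℤ,
          p = (![(m₁ : ℝ), (m₂ : ℝ), (m₃ : ℝ)],
               ![a * ((n₁ : ℝ) + (n₂ : ℝ)), b * ((n₂ : ℝ) - (n₁ : ℝ)), c * (n₃ : ℝ)])},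
        gaborCoef F (gaussian (Fin 3)) lam.1 lam.2 = 0 :=
  gaussian_incomplete_dim3_general a b c hcond
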